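/- arXiv:math/0111333 — 4 statements merged into one kernel-verified Lean document; each statement's English description precedes it below -/
import Mathlib

section
/- Let q > 2 be a power of an odd prime p and let M be a finite free (ℤ/qℤ)-module of rank n+2 equipped with a non-degenerate alternating-type bilinear pairing B : M × M → ℤ/qℤ (i.e. the induced map M → Hom(M, ℤ/qℤ) is bijective). If V ⊆ M is a submodule that is totally isotropic (B(v,w)=0 for all v,w ∈ V) and free as a (ℤ/qℤ)-module, then rank V ≤ n/2 + 1. -/
/-!
Restricting the pairing to `V` gives a map `M → Dual V`, `m ↦ (B m)|_V`, whose kernel contains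
`V` by isotropy. It is onto because `B` is onto and `ℤ/qℤ` is self-injective, so
`|V| · |Dual V| ≤ |M|`, that is `q ^ (2 r) ≤ q ^ (n + 2)` for `r = rank V`.
-/

namespace ZMod

theorem dvd_of_forall_mul_eq_zero {n : ℕ} [NeZero n] {a b : ZMod n}
    (h : ∀ y : ZMod n, y * a = 0 → y * b = 0) : a ∣ b := by
  -- `d = gcd a.val n` is a generator `a * a⁻¹` of `(a)`, and `n / d` annihilates `a`.
  set d := Nat.gcd a.val n
  have hdn : n / d * d = n := Nat.div_mul_cancel (Nat.gcd_dvd_right _ _)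
  have hb : n ∣ n / d * b.val := by
    rw [← natCast_eq_zero_iff, Nat.cast_mul, natCast_zmod_val]
    refine h _ ?_
    rw [← natCast_zmod_val a, ← Nat.cast_mul, natCast_eq_zero_iff]
    have := Nat.mul_dvd_mul_left (n / d) (Nat.gcd_dvd_left a.val n : d ∣ a.val)
    rwa [hdn] at this
  obtain ⟨t, ht⟩ : d ∣ b.val :=
    Nat.dvd_of_mul_dvd_mul_left (Nat.div_pos (Nat.gcd_le_right _ (NeZero.pos n))
      (Nat.gcd_pos_of_pos_right _ (NeZero.pos n))) (by rwa [hdn])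
  refine ⟨a⁻¹ * t, ?_⟩
  rw [← mul_assoc, mul_inv_eq_gcd, ← natCast_zmod_val b, ht, Nat.cast_mul]

theorem baer_self (n : ℕ) [NeZero n] : Module.Baer (ZMod n) (ZMod n) := by
  have := IsPrincipalIdealRing.of_surjective (Int.castRingHom (ZMod n)) intCast_surjective
  intro I g
  obtain ⟨a, rfl⟩ := (IsPrincipalIdealRing.principal I).principal
  have ha : a ∈ Ideal.span {a} := Ideal.subset_span rfl
  obtain ⟨c, hc⟩ : a ∣ g ⟨a, ha⟩ := dvd_of_forall_mul_eq_zero fun y hy => by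
    rw [← smul_eq_mul, ← map_smul, ← map_zero g]
    congr
    exact Subtype.ext hy
  refine ⟨LinearMap.toSpanSingleton _ _ c, fun x hx => ?_⟩
  obtain ⟨y, rfl⟩ := Ideal.mem_span_singleton'.mp hx
  have : (⟨y * a, hx⟩ : Ideal.span {a}) = y • ⟨a, ha⟩ := rfl
  rw [this, map_smul, hc, LinearMap.toSpanSingleton_apply, smul_eq_mul, smul_eq_mul, mul_assoc]

end ZMod

theorem LinearMap.dualMap_surjective_of_baer {R M N : Type*} [CommRing R] [AddCommGroup M]
    [Module R M] [AddCommGroup N] [Module R N] (hR : Module.Baer R R) {f : M →ₗ[R] N}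
    (hf : Function.Injective f) : Function.Surjective f.dualMap := fun g =>
  hR.extension_property f hf g

theorem Module.natCard_eq_pow_finrank_of_free (R M : Type*) [CommRing R] [Nontrivial R]
    [AddCommGroup M] [Module R M] [Module.Free R M] [Module.Finite R M] :
    Nat.card M = Nat.card R ^ Module.finrank R M := by
  rw [Nat.card_congr (Module.finBasis R M).equivFun.toEquiv, Nat.card_fun, Nat.card_fin]

theorem Submodule.natCard_mul_self_le_of_isotropic {R M : Type*} [CommRing R] [AddCommGroup M]
    [Module R M] [Finite M] (hR : Module.Baer R R) (B : M →ₗ[R] M →ₗ[R] R)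
    (hB : Function.Surjective B) (V : Submodule R M) [Module.Free R V] [Module.Finite R V]
    (hV : ∀ v ∈ V, ∀ w ∈ V, B v w = 0) :
    Nat.card V * Nat.card V ≤ Nat.card M := by
  set φ := V.subtype.dualMap ∘ₗ B
  have hφ : Function.Surjective φ :=
    (LinearMap.dualMap_surjective_of_baer hR V.injective_subtype).comp hB
  have hVker : V ≤ LinearMap.ker φ := fun v hv =>
    LinearMap.mem_ker.2 (LinearMap.ext fun w => hV v hv w w.2)
  calc Nat.card V * Nat.card V = Nat.card V * Nat.card (M ⧸ LinearMap.ker φ) := by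
        rw [Nat.card_congr (φ.quotKerEquivOfSurjective hφ).toEquiv,
          Nat.card_congr (Module.Free.chooseBasis R V).toDualEquiv.toEquiv]
    _ ≤ Nat.card (LinearMap.ker φ) * Nat.card (M ⧸ LinearMap.ker φ) :=
        Nat.mul_le_mul_right _ (Nat.card_le_card_of_injective _ (inclusion_injective hVker))
    _ = Nat.card M := (Submodule.card_eq_card_quotient_mul_card _).symm

theorem stmt_0_general {q n : ℕ}
    (hq2 : 2 < q)
    (M : Type*) [AddCommGroup M] [Module (ZMod q) M]
    [Module.Free (ZMod q) M] [Module.Finite (ZMod q) M]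
    (hrank : Module.finrank (ZMod q) M = n + 2)
    (B : M →ₗ[ZMod q] M →ₗ[ZMod q] ZMod q)
    (hBnd : Function.Bijective fun m : M => B m)
    (V : Submodule (ZMod q) M) [Module.Free (ZMod q) V]
    (hV : ∀ v ∈ V, ∀ w ∈ V, B v w = 0) :
    Module.finrank (ZMod q) V ≤ n / 2 + 1 := by
  have : NeZero q := ⟨by omega⟩
  have : Fact (1 < q) := ⟨by omega⟩
  have : Finite M := Module.finite_of_finite (ZMod q)
  have key := V.natCard_mul_self_le_of_isotropic (ZMod.baer_self q) B hBnd.2 hV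
  rw [Module.natCard_eq_pow_finrank_of_free (ZMod q) V,
    Module.natCard_eq_pow_finrank_of_free (ZMod q) M, hrank, Nat.card_zmod, ← pow_add,
    Nat.pow_le_pow_iff_right (by omega)] at key
  omega

/-- a totally isotropic free submodule of a free `ℤ/qℤ`-module of rank
`n + 2` with a non-degenerate alternating pairing has rank at most `n/2 + 1`. -/
theorem stmt_0 {p q n : ℕ} (hp : p.Prime) (hodd : Odd p) (hq : ∃ k, q = p ^ k)
    (hq2 : 2 < q) (hn : Even n)
    (M : Type*) [AddCommGroup M] [Module (ZMod q) M]
    [Module.Free (ZMod q) M] [Module.Finite (ZMod q) M]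
    (hrank : Module.finrank (ZMod q) M = n + 2)
    (B : M →ₗ[ZMod q] M →ₗ[ZMod q] ZMod q)
    (hBnd : Function.Bijective fun m : M => B m)
    (hBalt : ∀ m : M, B m m = 0)
    (V : Submodule (ZMod q) M) [Module.Free (ZMod q) V]
    (hV : ∀ v ∈ V, ∀ w ∈ V, B v w = 0) :
    Module.finrank (ZMod q) V ≤ n / 2 + 1 :=
  stmt_0_general hq2 M hrank B hBnd V hV
end

section
/- Let Δ be a finite group and G a finite p-group on which Δ acts by automorphisms, with gcd(|Δ|, p) = 1. Let G_Δ denote the maximal quotient of G on which the induced Δ-action is trivial, i.e. G_Δ = G/N where N is the normal subgroup generated by {g⁻¹·σ(g) : g ∈ G, σ ∈ Δ}. Then for the semidirect product 𝒢 = G ⋊ Δ, the maximal p-quotient 𝒢(p) of 𝒢 is canonically isomorphic to G_Δ. -/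
/-!
The projection `G → G_Δ` extends to `π : G ⋊ Δ → G_Δ` by sending `Δ` to `1`, and `G_Δ` is a
`p`-group, so the kernel of the maximal `p`-quotient is contained in `ker π`. Conversely, in any
`p`-quotient of `G ⋊ Δ` the image of `Δ` is trivial because `|Δ|` is prime to `p`; there
`g⁻¹ · σ(g) = g⁻¹ σ g σ⁻¹` becomes trivial as well, so `ker π = N ⋊ Δ` is killed.
Hence the two kernels agree.
-/

theorem IsPGroup.monoidHom_eq_one {p : ℕ} {G H : Type*} [Group G] [Group H]
    (hG : IsPGroup p G) (hH : (Nat.card H).Coprime p) (f : H →* G) : f = 1 := by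
  ext h
  apply (hG.powEquiv hH.symm).injective
  simp [IsPGroup.powEquiv_apply, ← map_pow, pow_card_eq_one']

namespace SemidirectProduct

variable {G Δ : Type*} [Group G] [Group Δ] (φ : Δ →* MulAut G)

def coinvariantsKernel : Subgroup G :=
  Subgroup.normalClosure {x : G | ∃ (g : G) (d : Δ), x = g⁻¹ * φ d g}

instance : (coinvariantsKernel φ).Normal := Subgroup.normalClosure_normal

theorem mk_aut_eq_mk (d : Δ) (g : G) :
    (QuotientGroup.mk (φ d g) : G ⧸ coinvariantsKernel φ) = QuotientGroup.mk g := by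
  rw [QuotientGroup.eq]
  have hmem : g⁻¹ * φ d g ∈ coinvariantsKernel φ := Subgroup.subset_normalClosure ⟨g, d, rfl⟩
  simpa using inv_mem hmem

def toCoinvariants : G ⋊[φ] Δ →* G ⧸ coinvariantsKernel φ :=
  lift (QuotientGroup.mk' _) 1 fun d => by ext g; simp [mk_aut_eq_mk]

@[simp]
theorem toCoinvariants_inl (g : G) : toCoinvariants φ (inl g) = QuotientGroup.mk g := by
  simp [toCoinvariants]

@[simp]
theorem toCoinvariants_inr (d : Δ) : toCoinvariants φ (inr d) = 1 := by
  simp [toCoinvariants]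

theorem toCoinvariants_surjective : Function.Surjective (toCoinvariants φ) := by
  rintro ⟨g⟩
  exact ⟨inl g, toCoinvariants_inl φ g⟩

theorem isPGroup_quotient_ker_toCoinvariants {p : ℕ} (hG : IsPGroup p G) :
    IsPGroup p ((G ⋊[φ] Δ) ⧸ (toCoinvariants φ).ker) :=
  (hG.to_quotient _).of_equiv
    (QuotientGroup.quotientKerEquivOfSurjective _ (toCoinvariants_surjective φ)).symm

section PQuotient

variable {φ} {p : ℕ} {K : Subgroup (G ⋊[φ] Δ)} [K.Normal]

theorem inr_mem_of_isPGroup_quotient (hcop : (Nat.card Δ).Coprime p)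
    (hKp : IsPGroup p ((G ⋊[φ] Δ) ⧸ K)) (d : Δ) : inr d ∈ K := by
  rw [← QuotientGroup.eq_one_iff]
  exact DFunLike.congr_fun (hKp.monoidHom_eq_one hcop ((QuotientGroup.mk' K).comp inr)) d

theorem inl_mem_of_mem_coinvariantsKernel (hcop : (Nat.card Δ).Coprime p)
    (hKp : IsPGroup p ((G ⋊[φ] Δ) ⧸ K)) {g : G}
    (hg : g ∈ coinvariantsKernel φ) : inl g ∈ K := by
  suffices coinvariantsKernel φ ≤ K.comap inl from this hg
  refine Subgroup.normalClosure_le_normal ?_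
  rintro _ ⟨g, d, rfl⟩
  have hd := inr_mem_of_isPGroup_quotient hcop hKp d
  have hconj := K.mul_mem (‹K.Normal›.conj_mem _ hd (inl g)⁻¹) (K.inv_mem hd)
  simpa [inl_aut, mul_assoc] using hconj

theorem ker_toCoinvariants_le (hcop : (Nat.card Δ).Coprime p)
    (hKp : IsPGroup p ((G ⋊[φ] Δ) ⧸ K)) : (toCoinvariants φ).ker ≤ K := by
  intro x hx
  have hleft : toCoinvariants φ (inl x.left) = 1 := by
    rwa [MonoidHom.mem_ker, ← inl_left_mul_inr_right x, map_mul, toCoinvariants_inr,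
      mul_one] at hx
  rw [← inl_left_mul_inr_right x]
  refine K.mul_mem (inl_mem_of_mem_coinvariantsKernel hcop hKp ?_)
    (inr_mem_of_isPGroup_quotient hcop hKp _)
  rwa [toCoinvariants_inl, QuotientGroup.eq_one_iff] at hleft

end PQuotient

end SemidirectProduct

theorem stmt_5_general {p : ℕ}
    (G Δ : Type*) [Group G] [Group Δ]
    (hG : IsPGroup p G) (hcop : Nat.Coprime (Nat.card Δ) p)
    (φ : Δ →* MulAut G)
    (K : Subgroup (G ⋊[φ] Δ)) [K.Normal]
    (hKp : IsPGroup p ((G ⋊[φ] Δ) ⧸ K))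
    (hKmin : ∀ (K' : Subgroup (G ⋊[φ] Δ)) [K'.Normal],
      IsPGroup p ((G ⋊[φ] Δ) ⧸ K') → K ≤ K') :
    ∃ e : ((G ⋊[φ] Δ) ⧸ K) ≃*
        (G ⧸ Subgroup.normalClosure {x : G | ∃ (g : G) (d : Δ), x = g⁻¹ * φ d g}),
      ∀ g : G, e (QuotientGroup.mk (SemidirectProduct.inl g)) = QuotientGroup.mk g := by
  open SemidirectProduct in
  have hK : K = (toCoinvariants φ).ker :=
    le_antisymm (hKmin _ (isPGroup_quotient_ker_toCoinvariants φ hG))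
      (ker_toCoinvariants_le hcop hKp)
  exact ⟨(QuotientGroup.quotientMulEquivOfEq hK).trans
      (QuotientGroup.quotientKerEquivOfSurjective _ (toCoinvariants_surjective φ)),
    fun g => toCoinvariants_inl φ g⟩

/-- for a finite `p`-group `G` with an action of a finite group `Δ` of
order prime to `p`, the maximal `p`-quotient of the semidirect product `G ⋊ Δ` is
canonically isomorphic to the maximal quotient `G_Δ` of `G` with trivial `Δ`-action,
where `G_Δ = G/N` with `N` the normal subgroup generated by the `g⁻¹·σ(g)`. -/
theorem stmt_5 {p : ℕ} (hp : p.Prime)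
    (G Δ : Type*) [Group G] [Group Δ] [Finite G] [Finite Δ]
    (hG : IsPGroup p G) (hcop : Nat.Coprime (Nat.card Δ) p)
    (φ : Δ →* MulAut G)
    (K : Subgroup (G ⋊[φ] Δ)) [K.Normal]
    (hKp : IsPGroup p ((G ⋊[φ] Δ) ⧸ K))
    (hKmin : ∀ (K' : Subgroup (G ⋊[φ] Δ)) [K'.Normal],
      IsPGroup p ((G ⋊[φ] Δ) ⧸ K') → K ≤ K') :
    ∃ e : ((G ⋊[φ] Δ) ⧸ K) ≃*
        (G ⧸ Subgroup.normalClosure {x : G | ∃ (g : G) (d : Δ), x = g⁻¹ * φ d g}),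
      ∀ g : G, e (QuotientGroup.mk (SemidirectProduct.inl g)) = QuotientGroup.mk g :=
  stmt_5_general G Δ hG hcop φ K hKp hKmin
end

section
/- Let p be an odd prime, V a finite-dimensional 𝔽_p-vector space with non-degenerate alternating bilinear pairing B of dimension 2m, and let σ be an involution of V with B(σx,σy) = -B(x,y). If U ⊆ V⁺ (the +1 eigenspace of σ) is a subspace, then there exists a subspace W ⊆ V⁻ with W ⊆ U^⊥ and dim W = m - dim U, and U ⊕ W is totally isotropic of dimension m. -/
/-!
The eigenspaces `V⁺ = ker (σ - 1)` and `V⁻ = ker (σ + 1)` of the involution are complementary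
(as `2` is invertible), and each is totally isotropic because `σ` negates `B` while acting by the
scalar `±1` on it. Since an isotropic subspace of a non-degenerate space has at most half its
dimension, both are Lagrangians of dimension `m`. Take `W = V⁻ ⊓ U^⊥`. As `V⁺ ≤ U^⊥`, the
subspaces `V⁻` and `U^⊥` span `V`, so `dim W = dim V⁻ + dim U^⊥ - dim V = m - dim U`; and `U ⊔ W`
is isotropic since `U ≤ V⁺`, `W ≤ V⁻` and `W ⊥ U`.
-/

/-- The orthogonal complement of a submodule with respect to a bilinear pairing. -/
def orthoComp {R M : Type*} [CommRing R] [AddCommGroup M] [Module R M]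
    (B : M →ₗ[R] M →ₗ[R] R) (K : Submodule R M) : Submodule R M where
  carrier := {v | ∀ k ∈ K, B v k = 0}
  add_mem' := by
    intro a b ha hb k hk
    simp [ha k hk, hb k hk]
  zero_mem' := by intro k hk; simp
  smul_mem' := by
    intro c a ha k hk
    simp [ha k hk]

open Module
open LinearMap (ker)

section CommRing

variable {R M : Type*} [CommRing R] [AddCommGroup M] [Module R M] (B : M →ₗ[R] M →ₗ[R] R)

theorem mem_orthoComp_iff_le_ker {K : Submodule R M} {v : M} :
    v ∈ orthoComp B K ↔ K ≤ ker (B v) :=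
  Iff.rfl

theorem orthoComp_le {K L : Submodule R M} (h : K ≤ L) : orthoComp B L ≤ orthoComp B K :=
  fun _ hv k hk => hv k (h hk)

theorem orthoComp_sup (K L : Submodule R M) :
    orthoComp B (K ⊔ L) = orthoComp B K ⊓ orthoComp B L := by
  ext v
  simp only [Submodule.mem_inf, mem_orthoComp_iff_le_ker, sup_le_iff]

theorem le_orthoComp_comm (hB : B.IsRefl) {K L : Submodule R M} :
    K ≤ orthoComp B L ↔ L ≤ orthoComp B K :=
  ⟨fun h _ hl _ hk => hB _ _ (h hk _ hl), fun h _ hk _ hl => hB _ _ (h hl _ hk)⟩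

theorem sup_le_orthoComp_sup (hB : B.IsRefl) {K L : Submodule R M}
    (hK : K ≤ orthoComp B K) (hL : L ≤ orthoComp B L) (hKL : L ≤ orthoComp B K) :
    K ⊔ L ≤ orthoComp B (K ⊔ L) := by
  rw [orthoComp_sup]
  exact sup_le (le_inf hK ((le_orthoComp_comm B hB).2 hKL)) (le_inf hKL hL)

end CommRing

section Field

variable {K V : Type*} [Field K] [AddCommGroup V] [Module K V]

section Involution

variable {σ : V →ₗ[K] V}

theorem mem_ker_sub_id_iff {x : V} : x ∈ ker (σ - LinearMap.id) ↔ σ x = x := by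
  rw [LinearMap.mem_ker, LinearMap.sub_apply, LinearMap.id_apply, sub_eq_zero]

theorem mem_ker_add_id_iff {x : V} : x ∈ ker (σ + LinearMap.id) ↔ σ x = -x := by
  rw [LinearMap.mem_ker, LinearMap.add_apply, LinearMap.id_apply, add_eq_zero_iff_eq_neg]

theorem isCompl_ker_sub_id_ker_add_id (h2 : (2 : K) ≠ 0) (hσ : σ ∘ₗ σ = LinearMap.id) :
    IsCompl (ker (σ - LinearMap.id)) (ker (σ + LinearMap.id)) := by
  have hσσ (x : V) : σ (σ x) = x := LinearMap.congr_fun hσ x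
  constructor
  · rw [Submodule.disjoint_def]
    intro x hxp hxm
    rw [mem_ker_sub_id_iff] at hxp
    rw [mem_ker_add_id_iff, hxp, eq_neg_iff_add_eq_zero, ← two_smul K] at hxm
    exact (smul_eq_zero.1 hxm).resolve_left h2
  · rw [codisjoint_iff, eq_top_iff]
    intro v _
    have hv : v = (2 : K)⁻¹ • (v + σ v) + (2 : K)⁻¹ • (v - σ v) := by
      rw [← smul_add, add_add_sub_cancel, ← two_smul K, smul_smul, inv_mul_cancel₀ h2, one_smul]
    rw [hv]
    refine Submodule.add_mem_sup (Submodule.smul_mem _ _ ?_) (Submodule.smul_mem _ _ ?_)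
    · rw [mem_ker_sub_id_iff, map_add, hσσ, add_comm]
    · rw [mem_ker_add_id_iff, map_sub, hσσ, neg_sub]

variable {B : V →ₗ[K] V →ₗ[K] K}

theorem apply_eq_zero_of_map_eq_smul (h2 : (2 : K) ≠ 0) (hBσ : ∀ x y, B (σ x) (σ y) = -B x y)
    {ε : K} (hε : ε * ε = 1) {x y : V} (hx : σ x = ε • x) (hy : σ y = ε • y) : B x y = 0 := by
  have h := hBσ x y
  simp only [hx, hy, map_smul, LinearMap.smul_apply, smul_eq_mul] at h
  have h' : 2 * B x y = 0 := by linear_combination h - B x y * hε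
  exact (mul_eq_zero.1 h').resolve_left h2

theorem ker_sub_id_le_orthoComp (h2 : (2 : K) ≠ 0) (hBσ : ∀ x y, B (σ x) (σ y) = -B x y) :
    ker (σ - LinearMap.id) ≤ orthoComp B (ker (σ - LinearMap.id)) := fun x hx y hy =>
  apply_eq_zero_of_map_eq_smul h2 hBσ (one_mul 1)
    ((mem_ker_sub_id_iff.1 hx).trans (one_smul K x).symm)
    ((mem_ker_sub_id_iff.1 hy).trans (one_smul K y).symm)

theorem ker_add_id_le_orthoComp (h2 : (2 : K) ≠ 0) (hBσ : ∀ x y, B (σ x) (σ y) = -B x y) :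
    ker (σ + LinearMap.id) ≤ orthoComp B (ker (σ + LinearMap.id)) := fun x hx y hy =>
  apply_eq_zero_of_map_eq_smul h2 hBσ (by norm_num)
    ((mem_ker_add_id_iff.1 hx).trans (neg_one_smul K x).symm)
    ((mem_ker_add_id_iff.1 hy).trans (neg_one_smul K y).symm)

end Involution

variable [FiniteDimensional K V] {B : V →ₗ[K] V →ₗ[K] K}

theorem finrank_orthoComp_add_finrank (hB : Function.Bijective fun v : V => B v)
    (L : Submodule K V) : finrank K (orthoComp B L) + finrank K L = finrank K V := by
  let e : V ≃ₗ[K] Dual K V := LinearEquiv.ofBijective B hB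
  have hL : orthoComp B L = L.dualAnnihilator.map (e.symm : Dual K V →ₗ[K] V) := by
    rw [← Submodule.comap_equiv_eq_map_symm]
    ext v
    simp only [Submodule.mem_comap, Submodule.mem_dualAnnihilator]
    exact Iff.rfl
  rw [hL, LinearEquiv.finrank_map_eq, add_comm, Subspace.finrank_add_finrank_dualAnnihilator_eq]

theorem two_mul_finrank_le_of_le_orthoComp (hB : Function.Bijective fun v : V => B v)
    {L : Submodule K V} (hL : L ≤ orthoComp B L) : 2 * finrank K L ≤ finrank K V := by
  have := Submodule.finrank_mono hL
  have := finrank_orthoComp_add_finrank hB L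
  omega

theorem two_mul_finrank_eq_of_isCompl (hB : Function.Bijective fun v : V => B v)
    {P Q : Submodule K V} (hPQ : IsCompl P Q) (hP : P ≤ orthoComp B P) (hQ : Q ≤ orthoComp B Q) :
    2 * finrank K P = finrank K V ∧ 2 * finrank K Q = finrank K V := by
  have := Submodule.finrank_add_eq_of_isCompl hPQ
  have := two_mul_finrank_le_of_le_orthoComp hB hP
  have := two_mul_finrank_le_of_le_orthoComp hB hQ
  omega

theorem finrank_inf_orthoComp_add_finrank (hB : Function.Bijective fun v : V => B v)
    {Q U : Submodule K V} (h : Codisjoint Q (orthoComp B U)) :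
    finrank K (Q ⊓ orthoComp B U : Submodule K V) + finrank K U = finrank K Q := by
  have := Submodule.finrank_sup_add_finrank_inf_eq Q (orthoComp B U)
  have := finrank_orthoComp_add_finrank hB U
  rw [h.eq_top, finrank_top] at *
  omega

end Field

/-- for a non-degenerate alternating pairing `B` on a `2m`-dimensional
`𝔽_p`-vector space (`p` odd) and an involution `σ` with `B(σx,σy) = -B(x,y)`, any
subspace `U` of the `+1`-eigenspace `V⁺` extends by some `W ⊆ V⁻ ∩ U^⊥` of dimension
`m - dim U` to a totally isotropic subspace `U ⊕ W` of dimension `m`. -/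
theorem stmt_15 {p m : ℕ} [Fact p.Prime] (hodd : Odd p)
    (V : Type*) [AddCommGroup V] [Module (ZMod p) V] [FiniteDimensional (ZMod p) V]
    (hdim : Module.finrank (ZMod p) V = 2 * m)
    (B : V →ₗ[ZMod p] V →ₗ[ZMod p] ZMod p)
    (hBnd : Function.Bijective fun v : V => B v)
    (hBalt : ∀ v : V, B v v = 0)
    (σ : V →ₗ[ZMod p] V) (hσ : σ ∘ₗ σ = LinearMap.id)
    (hBσ : ∀ x y : V, B (σ x) (σ y) = - B x y)
    (U : Submodule (ZMod p) V) (hU : U ≤ LinearMap.ker (σ - LinearMap.id)) :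
    ∃ W : Submodule (ZMod p) V,
      W ≤ LinearMap.ker (σ + LinearMap.id) ∧
      W ≤ orthoComp B U ∧
      Module.finrank (ZMod p) W = m - Module.finrank (ZMod p) U ∧
      (∀ x ∈ U ⊔ W, ∀ y ∈ U ⊔ W, B x y = 0) ∧
      Module.finrank (ZMod p) (U ⊔ W : Submodule (ZMod p) V) = m := by
  have h2 : (2 : ZMod p) ≠ 0 := Ring.two_ne_zero <| by
    rw [ZMod.ringChar_zmod_n]
    rintro rfl
    exact absurd hodd (by decide)
  have hcompl := isCompl_ker_sub_id_ker_add_id h2 hσ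
  have hVp := ker_sub_id_le_orthoComp h2 hBσ
  have hVm := ker_add_id_le_orthoComp h2 hBσ
  have hdims := two_mul_finrank_eq_of_isCompl hBnd hcompl hVp hVm
  have hVpU : ker (σ - LinearMap.id) ≤ orthoComp B U := hVp.trans (orthoComp_le B hU)
  have hW := finrank_inf_orthoComp_add_finrank hBnd (hcompl.codisjoint.symm.mono_right hVpU)
  set W := ker (σ + LinearMap.id) ⊓ orthoComp B U
  have hUW : Disjoint U W := hcompl.disjoint.mono hU inf_le_left
  have hsum := Submodule.finrank_sup_add_finrank_inf_eq U W
  rw [hUW.eq_bot, finrank_bot] at hsum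
  refine ⟨W, inf_le_left, inf_le_right, by omega, ?_, by omega⟩
  have hiso := sup_le_orthoComp_sup B (LinearMap.IsAlt.isRefl hBalt)
    (hU.trans hVpU) (inf_le_left.trans (hVm.trans (orthoComp_le B inf_le_left))) inf_le_right
  exact fun x hx y hy => hiso hx y hy
end

section
/- Let p be an odd prime, q > 2 a power of p, and M a free (ℤ/qℤ)-module of rank n+2 with non-degenerate pairing B. Suppose L ⊆ M is a submodule with L^⊥ free of rank 1 (so L = (L^⊥)^⊥ has corank 1), and V ⊆ L is a free totally isotropic submodule of rank n/2 + 1. Then L^⊥ ⊆ V. -/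
/-! A totally isotropic `V` satisfies `V ≤ V^⊥`. Non-degeneracy embeds `V^⊥` into the dual of
`M ⧸ V`, and a finite `ZMod q`-module has at most as many functionals as elements (composing
with the standard character `ZMod q → ℂ` gives distinct characters). So `|V^⊥| ≤ |M ⧸ V| = |V|`
when `|V|² = |M|`, which is what the ranks say; hence `V^⊥ = V`, and `L^⊥ ≤ V^⊥` because
`V ≤ L`. -/

theorem Module.Free.natCard_eq_pow_finrank (R M : Type*) [Semiring R] [StrongRankCondition R]
    [AddCommMonoid M] [Module R M] [Module.Free R M] [Module.Finite R M] :
    Nat.card M = Nat.card R ^ Module.finrank R M := by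
  rw [Nat.card_congr (Module.finBasis R M).equivFun.toEquiv, Nat.card_fun, Nat.card_fin]

namespace ZMod

variable {q : ℕ} [NeZero q] (A : Type*) [AddCommGroup A] [Module (ZMod q) A]

theorem injective_stdAddChar_comp_dual :
    Function.Injective fun f : Module.Dual (ZMod q) A ↦
      stdAddChar.compAddMonoidHom f.toAddMonoidHom := by
  intro f g hfg
  ext a
  exact injective_stdAddChar (DFunLike.congr_fun hfg a)

variable [Finite A]

instance finite_dual : Finite (Module.Dual (ZMod q) A) :=
  Finite.of_injective _ (injective_stdAddChar_comp_dual A)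

theorem card_dual_le : Nat.card (Module.Dual (ZMod q) A) ≤ Nat.card A := by
  have := Fintype.ofFinite A
  calc Nat.card (Module.Dual (ZMod q) A)
      ≤ Nat.card (AddChar A ℂ) :=
        Nat.card_le_card_of_injective _ (injective_stdAddChar_comp_dual A)
    _ = Nat.card A := by simp only [Nat.card_eq_fintype_card, AddChar.card_eq]

end ZMod

section orthoComp

variable {R M : Type*} [CommRing R] [AddCommGroup M] [Module R M] (B : M →ₗ[R] M →ₗ[R] R)

theorem orthoComp_anti {K K' : Submodule R M} (h : K ≤ K') : orthoComp B K' ≤ orthoComp B K :=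
  fun _ hv k hk ↦ hv k (h hk)

theorem injective_liftQ_orthoComp (hB : Function.Injective fun m : M ↦ B m)
    (K : Submodule R M) :
    Function.Injective fun m : orthoComp B K ↦
      K.liftQ (B m) fun k hk ↦ LinearMap.mem_ker.2 (m.2 k hk) := by
  intro m m' h
  have : B m = B m' :=
    LinearMap.ext fun x ↦ by
      simpa only [Submodule.liftQ_apply] using LinearMap.congr_fun h (Submodule.Quotient.mk x)
  exact Subtype.ext (hB this)

end orthoComp

theorem orthoComp_eq_self_of_isotropic {q : ℕ} [NeZero q] {M : Type*} [AddCommGroup M]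
    [Module (ZMod q) M] [Finite M] (B : M →ₗ[ZMod q] M →ₗ[ZMod q] ZMod q)
    (hB : Function.Injective fun m : M ↦ B m) {V : Submodule (ZMod q) M}
    (hV : ∀ v ∈ V, ∀ w ∈ V, B v w = 0) (hcard : Nat.card M = Nat.card V * Nat.card V) :
    orthoComp B V = V := by
  have hle : V ≤ orthoComp B V := hV
  have : Finite (M ⧸ V) := Finite.of_surjective _ V.mkQ_surjective
  have hquot : Nat.card (M ⧸ V) = Nat.card V :=
    Nat.eq_of_mul_eq_mul_left Nat.card_pos
      ((Submodule.card_eq_card_quotient_mul_card V).symm.trans hcard)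
  have hge : Nat.card (orthoComp B V) ≤ Nat.card V :=
    calc Nat.card (orthoComp B V)
        ≤ Nat.card (Module.Dual (ZMod q) (M ⧸ V)) :=
          Nat.card_le_card_of_injective _ (injective_liftQ_orthoComp B hB V)
      _ ≤ Nat.card (M ⧸ V) := ZMod.card_dual_le _
      _ = Nat.card V := hquot
  exact (SetLike.coe_injective <|
    Set.Finite.eq_of_subset_of_card_le (Set.toFinite _) hle hge).symm

theorem stmt_19_general {q n : ℕ} (hq2 : 2 < q) (hn : Even n)
    (M : Type*) [AddCommGroup M] [Module (ZMod q) M]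
    [Module.Free (ZMod q) M] [Module.Finite (ZMod q) M]
    (hrank : Module.finrank (ZMod q) M = n + 2)
    (B : M →ₗ[ZMod q] M →ₗ[ZMod q] ZMod q)
    (hBnd : Function.Bijective fun m : M => B m)
    (L : Submodule (ZMod q) M)
    (V : Submodule (ZMod q) M) (hVL : V ≤ L) [Module.Free (ZMod q) V]
    (hViso : ∀ v ∈ V, ∀ w ∈ V, B v w = 0)
    (hVrank : Module.finrank (ZMod q) V = n / 2 + 1) :
    orthoComp B L ≤ V := by
  have : Fact (1 < q) := ⟨by omega⟩
  have : Finite M := Module.finite_of_finite (ZMod q)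
  have hcard : Nat.card M = Nat.card V * Nat.card V := by
    obtain ⟨m, rfl⟩ := hn
    rw [Module.Free.natCard_eq_pow_finrank (ZMod q) M,
      Module.Free.natCard_eq_pow_finrank (ZMod q) V, hrank, hVrank, ← pow_add]
    congr 1
    omega
  rw [← orthoComp_eq_self_of_isotropic B hBnd.injective hViso hcard]
  exact orthoComp_anti B hVL

/-- abstraction of Proposition 2.3: if `L` has orthogonal complement
free of rank 1 and `V ⊆ L` is a free totally isotropic submodule of maximal rank
`n/2 + 1`, then `L^⊥ ⊆ V`. -/
theorem stmt_19 {p q n : ℕ} (hp : p.Prime) (hodd : Odd p) (hq : ∃ k, q = p ^ k)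
    (hq2 : 2 < q) (hn : Even n)
    (M : Type*) [AddCommGroup M] [Module (ZMod q) M]
    [Module.Free (ZMod q) M] [Module.Finite (ZMod q) M]
    (hrank : Module.finrank (ZMod q) M = n + 2)
    (B : M →ₗ[ZMod q] M →ₗ[ZMod q] ZMod q)
    (hBnd : Function.Bijective fun m : M => B m)
    (L : Submodule (ZMod q) M)
    [Module.Free (ZMod q) (orthoComp B L)]
    (hLperp : Module.finrank (ZMod q) (orthoComp B L) = 1)
    (V : Submodule (ZMod q) M) (hVL : V ≤ L) [Module.Free (ZMod q) V]
    (hViso : ∀ v ∈ V, ∀ w ∈ V, B v w = 0)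
    (hVrank : Module.finrank (ZMod q) V = n / 2 + 1) :
    orthoComp B L ≤ V :=
  stmt_19_general hq2 hn M hrank B hBnd L V hVL hViso hVrank
end
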